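/- For k ≥ n ≥ 1, the map sending an n-tuple of control functions (c₁, ..., cₙ), each cⱼ : 𝔹^{k-1} → 𝔹, to the composition Gₙ ∘ ⋯ ∘ G₁ of single-target gates on k lines, where Gⱼ has target line j and control function cⱼ, is injective. Consequently exactly (2^(2^(k-1)))^n distinct bijections of 𝔹^k are realized by such circuits. -/
import Mathlib


/-- A single-target gate with target `i` and control function `c`. -/
def stg {k : ℕ} (i : Fin k) (c : (Fin k → Bool) → Bool) (x : Fin k → Bool) : Fin k → Bool :=
  Function.update x i (xor (x i) (c x))

/-- `c` does not depend on coordinate `i`. -/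
def IndepOf {k : ℕ} (i : Fin k) (c : (Fin k → Bool) → Bool) : Prop :=
  ∀ x y : Fin k → Bool, (∀ j, j ≠ i → x j = y j) → c x = c y

/-- The half V-shaped circuit on `k` lines with `n` single-target gates whose
targets are lines `1, …, n` in increasing order, with control functions `c`. -/
def circuit {n k : ℕ} (h : n ≤ k) (c : Fin n → ((Fin k → Bool) → Bool))
    (x : Fin k → Bool) : Fin k → Bool :=
  (List.finRange n).foldl (fun y j => stg (Fin.castLE h j) (c j) y) x

def part {n k : ℕ} (h : n ≤ k) (c : Fin n → ((Fin k → Bool) → Bool)) (m : ℕ)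
    (x : Fin k → Bool) : Fin k → Bool :=
  ((List.finRange n).take m).foldl (fun y j => stg (Fin.castLE h j) (c j) y) x

lemma stg_ne {k : ℕ} {i j : Fin k} (hij : j ≠ i) (c : (Fin k → Bool) → Bool)
    (x : Fin k → Bool) : stg i c x j = x j := by
  simp [stg, Function.update_of_ne hij]

lemma stg_self {k : ℕ} (i : Fin k) (c : (Fin k → Bool) → Bool)
    (x : Fin k → Bool) : stg i c x i = xor (x i) (c x) := by
  simp [stg]

lemma stg_invol {k : ℕ} {i : Fin k} {c : (Fin k → Bool) → Bool} (hc : IndepOf i c) :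
    Function.Involutive (stg i c) := by
  intro x
  have hcc : c (stg i c x) = c x := hc _ _ (fun j hj => stg_ne hj c x)
  funext j
  by_cases hij : j = i
  · subst hij
    rw [stg_self, stg_self, hcc]
    cases x j <;> cases c x <;> rfl
  · rw [stg_ne hij, stg_ne hij]

lemma part_succ {n k : ℕ} (h : n ≤ k) (c : Fin n → ((Fin k → Bool) → Bool)) {m : ℕ}
    (hm : m < n) (x : Fin k → Bool) :
    part h c (m + 1) x = stg (Fin.castLE h ⟨m, hm⟩) (c ⟨m, hm⟩) (part h c m x) := by
  have hlen : m < (List.finRange n).length := by simpa using hm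
  rw [part, List.take_succ, List.getElem?_eq_getElem hlen]
  simp [List.foldl_append, part, List.getElem_finRange, Fin.cast]

lemma part_stable {n k : ℕ} (h : n ≤ k) (c : Fin n → ((Fin k → Bool) → Bool)) {m : ℕ}
    (hm : n ≤ m) (x : Fin k → Bool) : part h c (m + 1) x = part h c m x := by
  rw [part, part, List.take_of_length_le (by simp; omega),
    List.take_of_length_le (by simp; omega)]

lemma circuit_eq_part {n k : ℕ} (h : n ≤ k) (c : Fin n → ((Fin k → Bool) → Bool)) :
    circuit h c = part h c n := by
  funext x
  rw [circuit, part, List.take_of_length_le (by simp)]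

lemma part_zero {n k : ℕ} (h : n ≤ k) (c : Fin n → ((Fin k → Bool) → Bool))
    (x : Fin k → Bool) : part h c 0 x = x := rfl

lemma part_bijective {n k : ℕ} (h : n ≤ k) {c : Fin n → ((Fin k → Bool) → Bool)}
    (hc : ∀ j, IndepOf (Fin.castLE h j) (c j)) (m : ℕ) :
    Function.Bijective (part h c m) := by
  induction m with
  | zero => exact Function.bijective_id
  | succ m ih =>
    by_cases hm : m < n
    · have : part h c (m + 1) = (stg (Fin.castLE h ⟨m, hm⟩) (c ⟨m, hm⟩)) ∘ part h c m := by
        funext x; exact part_succ h c hm x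
      rw [this]
      exact ((stg_invol (hc ⟨m, hm⟩)).bijective).comp ih
    · have : part h c (m + 1) = part h c m := by
        funext x; exact part_stable h c (by omega) x
      rwa [this]

lemma part_frozen {n k : ℕ} (h : n ≤ k) (c : Fin n → ((Fin k → Bool) → Bool))
    (j : Fin n) {m : ℕ} (hm : j.val + 1 ≤ m) (x : Fin k → Bool) :
    part h c m x (Fin.castLE h j) = part h c (j.val + 1) x (Fin.castLE h j) := by
  induction m with
  | zero => omega
  | succ m ih =>
    rcases Nat.lt_or_ge m (j.val + 1) with hlt | hge
    · have : m = j.val := by omega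
      subst this; rfl
    · by_cases hmn : m < n
      · rw [part_succ h c hmn, stg_ne, ih hge]
        intro hh
        have := congrArg Fin.val hh
        simp only [Fin.coe_castLE, Fin.val_mk] at this
        omega
      · rw [part_stable h c (by omega), ih hge]

lemma part_congr {n k : ℕ} (h : n ≤ k) {c d : Fin n → ((Fin k → Bool) → Bool)} (m : ℕ)
    (hcd : ∀ j : Fin n, j.val < m → c j = d j) :
    part h c m = part h d m := by
  induction m with
  | zero => rfl
  | succ m ih =>
    have ih' := ih (fun j hj => hcd j (by omega))
    by_cases hm : m < n
    · funext x
      rw [part_succ h c hm, part_succ h d hm, ih', hcd ⟨m, hm⟩ (Nat.lt_succ_self m)]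
    · funext x
      rw [part_stable h c (by omega), part_stable h d (by omega), ih']

lemma circuit_coord {n k : ℕ} (h : n ≤ k) (c : Fin n → ((Fin k → Bool) → Bool))
    (j : Fin n) (x : Fin k → Bool) :
    circuit h c x (Fin.castLE h j) =
      xor (part h c j.val x (Fin.castLE h j)) (c j (part h c j.val x)) := by
  rw [circuit_eq_part, part_frozen h c j (by omega) x]
  have : (⟨j.val, j.isLt⟩ : Fin n) = j := rfl
  rw [part_succ h c j.isLt x, this, stg_self]

lemma circuit_inj {n k : ℕ} (h : n ≤ k) (c d : Fin n → ((Fin k → Bool) → Bool))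
    (hc : ∀ j, IndepOf (Fin.castLE h j) (c j)) (hd : ∀ j, IndepOf (Fin.castLE h j) (d j))
    (hcd : circuit h c = circuit h d) : c = d := by
  have key : ∀ m : ℕ, ∀ j : Fin n, j.val < m → c j = d j := by
    intro m
    induction m with
    | zero => omega
    | succ m ih =>
      intro j hj
      rcases Nat.lt_or_ge j.val m with hlt | hge
      · exact ih j hlt
      · have heq : j.val = m := by omega
        subst heq
        have hpart : part h c j.val = part h d j.val := part_congr h j.val ih
        funext y
        obtain ⟨x, hx⟩ := (part_bijective h hc j.val).surjective y
        have hthis := congrFun (congrFun hcd x) (Fin.castLE h j)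
        rw [circuit_coord h c j x, circuit_coord h d j x, ← hpart, hx] at hthis
        cases y (Fin.castLE h j) <;> simpa using hthis
  funext j
  exact key n j j.isLt

def equiv_indep {k : ℕ} (i : Fin k) :
    {f : (Fin k → Bool) → Bool // IndepOf i f} ≃ ({x : Fin k → Bool // x i = false} → Bool) where
  toFun f := fun x => f.1 x.1
  invFun g := ⟨fun x => g ⟨Function.update x i false, by simp⟩, by
    intro x y hxy
    refine congrArg g (Subtype.ext ?_)
    funext j
    show Function.update x i false j = Function.update y i false j
    by_cases hj : j = i
    · subst hj; simp
    · rw [Function.update_of_ne hj, Function.update_of_ne hj, hxy j hj]⟩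
  left_inv f := by
    apply Subtype.ext
    funext x
    exact f.2 _ _ (fun j hj => Function.update_of_ne hj _ _)
  right_inv g := by
    funext x
    refine congrArg g (Subtype.ext ?_)
    funext j
    by_cases hj : j = i
    · subst hj
      show Function.update x.1 j false j = x.1 j
      rw [Function.update_self, x.2]
    · exact Function.update_of_ne hj _ _

def equiv_false {k : ℕ} (i : Fin k) :
    {x : Fin k → Bool // x i = false} ≃ ({j : Fin k // j ≠ i} → Bool) where
  toFun x := fun j => x.1 j.1
  invFun g := ⟨fun j => if hj : j = i then false else g ⟨j, hj⟩, by simp⟩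
  left_inv x := by
    apply Subtype.ext
    funext j
    by_cases hj : j = i
    · subst hj; simp [x.2]
    · simp [hj]
  right_inv g := by
    funext j
    simp [j.2]

lemma card_indep {k : ℕ} (i : Fin k) :
    Nat.card {f : (Fin k → Bool) → Bool // IndepOf i f} = 2 ^ 2 ^ (k - 1) := by
  have h1 : Fintype.card {j : Fin k // j ≠ i} = k - 1 := by
    simp [Fintype.card_subtype_compl]
  rw [Nat.card_congr (equiv_indep i), Nat.card_eq_fintype_card, Fintype.card_fun,
    Fintype.card_congr (equiv_false i), Fintype.card_fun, h1, Fintype.card_bool]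

theorem stmt_13 (n k : ℕ) (hn : 1 ≤ n) (h : n ≤ k) :
    (∀ c d : Fin n → ((Fin k → Bool) → Bool),
      (∀ j, IndepOf (Fin.castLE h j) (c j)) → (∀ j, IndepOf (Fin.castLE h j) (d j)) →
      circuit h c = circuit h d → c = d) ∧
    Set.ncard {f : (Fin k → Bool) → (Fin k → Bool) |
        ∃ c : Fin n → ((Fin k → Bool) → Bool),
          (∀ j, IndepOf (Fin.castLE h j) (c j)) ∧ f = circuit h c} =
      (2 ^ 2 ^ (k - 1)) ^ n := by
  refine ⟨circuit_inj h, ?_⟩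
  have hset : {f : (Fin k → Bool) → (Fin k → Bool) |
        ∃ c : Fin n → ((Fin k → Bool) → Bool),
          (∀ j, IndepOf (Fin.castLE h j) (c j)) ∧ f = circuit h c} =
      circuit h '' {c | ∀ j, IndepOf (Fin.castLE h j) (c j)} := by
    ext f
    simp only [Set.mem_setOf_eq, Set.mem_image]
    constructor
    · rintro ⟨c, hc, rfl⟩; exact ⟨c, hc, rfl⟩
    · rintro ⟨c, hc, rfl⟩; exact ⟨c, hc, rfl⟩
  have hinj : Set.InjOn (circuit h)
      {c : Fin n → ((Fin k → Bool) → Bool) | ∀ j, IndepOf (Fin.castLE h j) (c j)} := by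
    intro c hc d hd hcd
    exact circuit_inj h c d hc hd hcd
  rw [hset, Set.ncard_image_of_injOn hinj, ← Nat.card_coe_set_eq]
  have e : ↥{c : Fin n → ((Fin k → Bool) → Bool) | ∀ j, IndepOf (Fin.castLE h j) (c j)} ≃
      ∀ j : Fin n, {f : (Fin k → Bool) → Bool // IndepOf (Fin.castLE h j) f} :=
    Equiv.subtypePiEquivPi
  rw [Nat.card_congr e, Nat.card_pi]
  simp [card_indep]
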